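/- arXiv:1411.4357 — 2 statements merged into one kernel-verified Lean document; each statement's English description precedes it below -/
import Mathlib

section
/- Let M be a real n×d matrix, b ∈ ℝⁿ, and x* ∈ ℝ^d with Mᵀ(Mx* − b) = 0 (the normal equations). Suppose 0 ≤ ε₀ ≤ 1 and for all x ∈ ℝ^d, (1 − ε₀)‖x‖₂ ≤ ‖Mx‖₂ ≤ (1 + ε₀)‖x‖₂ (i.e., all singular values of M lie in [1 − ε₀, 1 + ε₀]). Then for any x ∈ ℝ^d, the iterate x′ = x + Mᵀ(b − Mx) satisfies ‖M(x′ − x*)‖₂ ≤ 3ε₀·‖M(x − x*)‖₂. -/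
open Matrix

/-- The Euclidean norm of a vector in `ℝ^n`. -/
noncomputable def euclNorm {n : ℕ} (x : Fin n → ℝ) : ℝ := Real.sqrt (∑ i, (x i) ^ 2)

/-!
Let `L` be `M` acting between Euclidean spaces, `A = L† L` and `T = 1 - A`. By the normal
equations the error of the refined iterate is `T e` with `e = x - x*`. The operator `T` is
symmetric for the semi-inner product `(u, v) ↦ ⟪L u, L v⟫`, and its quadratic form
`⟪L (T v), L v⟫ = ‖L v‖² - ‖A v‖²` is bounded by `(2ε + ε²) ‖L v‖²` in absolute value, since
`(1 - ε) ‖L v‖ ≤ ‖A v‖ ≤ (1 + ε) ‖L v‖`. By polarization, a symmetric operator whose quadratic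
form is bounded by `c` times the squared seminorm is itself bounded by `c`, so
`‖L (T e)‖ ≤ (2ε + ε²) ‖L e‖ ≤ 3ε ‖L e‖`.
-/

open scoped RealInnerProductSpace

theorem norm_map_le_of_abs_inner_le {V W : Type*} [AddCommGroup V] [Module ℝ V]
    [NormedAddCommGroup W] [InnerProductSpace ℝ W] (f : V →ₗ[ℝ] W) (T : V →ₗ[ℝ] V) {c : ℝ}
    (hsymm : ∀ u v, ⟪f (T u), f v⟫ = ⟪f u, f (T v)⟫)
    (hbound : ∀ v, |⟪f (T v), f v⟫| ≤ c * ‖f v‖ ^ 2) (v : V) :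
    ‖f (T v)‖ ≤ c * ‖f v‖ := by
  have polarization : ∀ u w, 4 * ⟪f (T u), f w⟫ ≤ 2 * c * (‖f u‖ ^ 2 + ‖f w‖ ^ 2) := by
    intro u w
    have hplus := (abs_le.mp (hbound (u + w))).2
    have hminus := (abs_le.mp (hbound (u - w))).1
    have hswap : ⟪f (T w), f u⟫ = ⟪f (T u), f w⟫ := by rw [hsymm, real_inner_comm]
    simp only [map_add, map_sub, inner_add_left, inner_add_right, inner_sub_left,
      inner_sub_right, hswap, norm_add_sq_real, norm_sub_sq_real] at hplus hminus
    linarith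
  rcases (norm_nonneg (f v)).eq_or_lt with ha | ha
  · have hfv : f v = 0 := norm_eq_zero.mp ha.symm
    have : ‖f (T v)‖ ^ 2 = 0 := by
      rw [← real_inner_self_eq_norm_sq, hsymm, hfv, inner_zero_left]
    rw [← ha, mul_zero]
    exact (pow_eq_zero_iff two_ne_zero).mp this |>.le
  have hc : 0 ≤ c :=
    nonneg_of_mul_nonneg_left ((abs_nonneg _).trans (hbound v)) (by positivity)
  rcases (norm_nonneg (f (T v))).eq_or_lt with hb | hb
  · rw [← hb]
    positivity
  -- rescaling `v` and `T v` makes the two terms on the right equal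
  have key := polarization (‖f (T v)‖ • v) (‖f v‖ • T v)
  simp only [map_smul, inner_smul_left, inner_smul_right, norm_smul, real_inner_self_eq_norm_sq,
    norm_norm, RCLike.conj_to_real] at key
  have hmul : (‖f v‖ * ‖f (T v)‖ ^ 2) * ‖f (T v)‖ ≤ (‖f v‖ * ‖f (T v)‖ ^ 2) * (c * ‖f v‖) := by
    linarith
  exact le_of_mul_le_mul_left hmul (by positivity)

section Adjoint

variable {E F : Type*} [NormedAddCommGroup E] [InnerProductSpace ℝ E] [CompleteSpace E]
  [NormedAddCommGroup F] [InnerProductSpace ℝ F] [CompleteSpace F] (L : E →L[ℝ] F)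

open ContinuousLinearMap

theorem norm_adjoint_apply_le {K : ℝ} (hK : 0 ≤ K) (hL : ∀ v, ‖L v‖ ≤ K * ‖v‖) (y : F) :
    ‖adjoint L y‖ ≤ K * ‖y‖ :=
  calc ‖adjoint L y‖ ≤ ‖adjoint L‖ * ‖y‖ := le_opNorm _ _
    _ = ‖L‖ * ‖y‖ := by rw [LinearIsometryEquiv.norm_map]
    _ ≤ K * ‖y‖ := by gcongr; exact opNorm_le_bound L hK hL

theorem mul_norm_apply_le_norm_adjoint_apply_apply {k : ℝ} (hL : ∀ v, k * ‖v‖ ≤ ‖L v‖)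
    (v : E) : k * ‖L v‖ ≤ ‖adjoint L (L v)‖ := by
  have hcs : ‖L v‖ ^ 2 ≤ ‖v‖ * ‖adjoint L (L v)‖ := by
    rw [← real_inner_self_eq_norm_sq, ← adjoint_inner_right]
    exact real_inner_le_norm _ _
  rcases le_or_gt k 0 with hk | hk
  · exact (mul_nonpos_of_nonpos_of_nonneg hk (norm_nonneg _)).trans (norm_nonneg _)
  rcases (norm_nonneg (L v)).eq_or_lt with h0 | hpos
  · rw [← h0, mul_zero]
    exact norm_nonneg _
  have := mul_le_mul_of_nonneg_right (hL v) (norm_nonneg (adjoint L (L v)))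
  nlinarith

theorem sub_adjoint_comp_self_apply (v : E) :
    (1 - adjoint L ∘L L) v = v - adjoint L (L v) := rfl

theorem inner_map_sub_adjoint_comp_self_apply (v : E) :
    ⟪L ((1 - adjoint L ∘L L) v), L v⟫ = ‖L v‖ ^ 2 - ‖adjoint L (L v)‖ ^ 2 := by
  rw [sub_adjoint_comp_self_apply, map_sub, inner_sub_left,
    ← adjoint_inner_right L (adjoint L (L v)) (L v), real_inner_self_eq_norm_sq,
    real_inner_self_eq_norm_sq]

theorem inner_map_sub_adjoint_comp_self_apply_symm (u v : E) :
    ⟪L ((1 - adjoint L ∘L L) u), L v⟫ = ⟪L u, L ((1 - adjoint L ∘L L) v)⟫ := by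
  rw [sub_adjoint_comp_self_apply, sub_adjoint_comp_self_apply, map_sub, map_sub, inner_sub_left,
    inner_sub_right, ← adjoint_inner_right L (adjoint L (L u)) (L v),
    ← adjoint_inner_left L (adjoint L (L v)) (L u)]

theorem norm_map_sub_adjoint_comp_self_apply_le {ε : ℝ} (hε0 : 0 ≤ ε) (hε1 : ε ≤ 1)
    (hL : ∀ v, (1 - ε) * ‖v‖ ≤ ‖L v‖ ∧ ‖L v‖ ≤ (1 + ε) * ‖v‖) (v : E) :
    ‖L ((1 - adjoint L ∘L L) v)‖ ≤ (2 * ε + ε ^ 2) * ‖L v‖ := by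
  refine norm_map_le_of_abs_inner_le (L : E →ₗ[ℝ] F)
    ((1 - adjoint L ∘L L : E →L[ℝ] E) : E →ₗ[ℝ] E)
    (inner_map_sub_adjoint_comp_self_apply_symm L) (fun w => ?_) v
  have hlow := mul_norm_apply_le_norm_adjoint_apply_apply L (fun v => (hL v).1) w
  have hup := norm_adjoint_apply_le L (by linarith) (fun v => (hL v).2) (L w)
  have := norm_nonneg (L w)
  rw [coe_coe, coe_coe, inner_map_sub_adjoint_comp_self_apply, abs_le]
  constructor <;> nlinarith [mul_le_mul hlow hlow (by nlinarith) (norm_nonneg _)]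

theorem add_adjoint_apply_sub_sub_eq {b : F} {xstar : E} (hnormal : adjoint L (L xstar - b) = 0)
    (x : E) : x + adjoint L (b - L x) - xstar = (1 - adjoint L ∘L L) (x - xstar) := by
  have hb : adjoint L b = adjoint L (L xstar) := by
    rw [← sub_eq_zero, ← map_sub, ← neg_sub, map_neg, hnormal, neg_zero]
  simp only [sub_adjoint_comp_self_apply, map_sub, hb]
  abel

theorem norm_map_refinement_sub_le {b : F} {xstar : E} (hnormal : adjoint L (L xstar - b) = 0)
    {ε : ℝ} (hε0 : 0 ≤ ε) (hε1 : ε ≤ 1)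
    (hL : ∀ v, (1 - ε) * ‖v‖ ≤ ‖L v‖ ∧ ‖L v‖ ≤ (1 + ε) * ‖v‖) (x : E) :
    ‖L (x + adjoint L (b - L x) - xstar)‖ ≤ 3 * ε * ‖L (x - xstar)‖ := by
  rw [add_adjoint_apply_sub_sub_eq L hnormal]
  calc _ ≤ (2 * ε + ε ^ 2) * ‖L (x - xstar)‖ :=
        norm_map_sub_adjoint_comp_self_apply_le L hε0 hε1 hL _
    _ ≤ 3 * ε * ‖L (x - xstar)‖ := by gcongr; nlinarith

end Adjoint

theorem euclNorm_eq_norm_toLp {n : ℕ} (x : Fin n → ℝ) :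
    euclNorm x = ‖(WithLp.toLp 2 x : EuclideanSpace ℝ (Fin n))‖ := by
  simp [euclNorm, EuclideanSpace.norm_eq]

theorem Matrix.adjoint_toEuclideanLin_toLp {m n : ℕ} (M : Matrix (Fin m) (Fin n) ℝ)
    (y : Fin m → ℝ) :
    ContinuousLinearMap.adjoint (Matrix.toEuclideanLin M).toContinuousLinearMap (WithLp.toLp 2 y)
      = WithLp.toLp 2 (Mᵀ *ᵥ y) := by
  rw [← LinearMap.adjoint_toContinuousLinearMap, ← Matrix.toEuclideanLin_conjTranspose_eq_adjoint,
    conjTranspose_eq_transpose_of_trivial]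
  rfl

/-- one step of iterative refinement for well-conditioned least squares. -/
theorem stmt8 {n d : ℕ} (M : Matrix (Fin n) (Fin d) ℝ) (b : Fin n → ℝ) (xstar : Fin d → ℝ)
    (hnormal : Mᵀ.mulVec (M.mulVec xstar - b) = 0)
    (ε₀ : ℝ) (hε₀0 : 0 ≤ ε₀) (hε₀1 : ε₀ ≤ 1)
    (hsv : ∀ x : Fin d → ℝ,
      (1 - ε₀) * euclNorm x ≤ euclNorm (M.mulVec x) ∧
      euclNorm (M.mulVec x) ≤ (1 + ε₀) * euclNorm x)
    (x : Fin d → ℝ) :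
    euclNorm (M.mulVec ((x + Mᵀ.mulVec (b - M.mulVec x)) - xstar))
      ≤ 3 * ε₀ * euclNorm (M.mulVec (x - xstar)) := by
  set L := (Matrix.toEuclideanLin M).toContinuousLinearMap
  have hL : ∀ v, L v = WithLp.toLp 2 (M *ᵥ v.ofLp) := fun _ => rfl
  have hLadj : ∀ y, ContinuousLinearMap.adjoint L (WithLp.toLp 2 y) = WithLp.toLp 2 (Mᵀ *ᵥ y) :=
    Matrix.adjoint_toEuclideanLin_toLp M
  have key := norm_map_refinement_sub_le L (b := WithLp.toLp 2 b) (xstar := WithLp.toLp 2 xstar)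
    (by rw [hL, ← WithLp.toLp_sub, hLadj, hnormal, WithLp.toLp_zero]) hε₀0 hε₀1
    (fun v => by simpa only [euclNorm_eq_norm_toLp, WithLp.toLp_ofLp, hL] using hsv v.ofLp)
    (WithLp.toLp 2 x)
  simpa only [euclNorm_eq_norm_toLp, hL, WithLp.ofLp_toLp, ← WithLp.toLp_sub, hLadj,
    ← WithLp.toLp_add] using key
end

section
/- Let A be a real m×n matrix, let Z be a real n×k matrix with ZᵀZ = I_k, and set E = A − AZZᵀ (so A = AZZᵀ + E). Let S be a real n×c matrix and suppose W is a real c×k matrix with (ZᵀS)W = I_k (a right inverse of ZᵀS; in particular such a W exists whenever rank(ZᵀS) = k, e.g., the Moore–Penrose pseudoinverse). Then ‖A − A·S·W·Zᵀ‖_F² = ‖E‖_F² + ‖E·S·W·Zᵀ‖_F² ≤ ‖E‖_F² + ‖E·S·W‖_F². In particular, A·S·W·Zᵀ is a matrix of rank at most k in the column space of C = AS with ‖A − ASWZᵀ‖_F² ≤ ‖E‖_F² + ‖ESW‖_F². -/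
/-! Because `(Zᵀ S) W = I`, the rank-`k` part `A Z Zᵀ` is reproduced exactly by
`A Z Zᵀ · S W Zᵀ`, so `A - A S W Zᵀ = E - E S W Zᵀ`. Since `E Z = 0`, `E` is orthogonal to every
matrix of the form `X Zᵀ`, which gives the Pythagorean identity, and right multiplication by
`Zᵀ` preserves the Frobenius norm because `Zᵀ Z = I`. -/

open Matrix

noncomputable def frobNorm {m n : ℕ} (M : Matrix (Fin m) (Fin n) ℝ) : ℝ :=
  Real.sqrt (∑ i, ∑ j, (M i j) ^ 2)

section Trace

variable {R : Type*} [CommRing R] {l m n : Type*} [Fintype l] [Fintype m] [Fintype n]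

theorem Matrix.trace_transpose_mul_mul_transpose_eq_zero {E : Matrix m n R}
    {Z : Matrix n l R} (hEZ : E * Z = 0) (X : Matrix m l R) :
    (Eᵀ * (X * Zᵀ)).trace = 0 := by
  rw [← Matrix.mul_assoc, trace_mul_comm, ← Matrix.mul_assoc, ← transpose_mul, hEZ,
    transpose_zero, Matrix.zero_mul, trace_zero]

theorem Matrix.trace_transpose_sub_mul_sub {E D : Matrix m n R}
    (h : (Eᵀ * D).trace = 0) :
    ((E - D)ᵀ * (E - D)).trace = (Eᵀ * E).trace + (Dᵀ * D).trace := by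
  have hDE : (Dᵀ * E).trace = 0 := by
    rw [← trace_transpose, transpose_mul, transpose_transpose, h]
  simp only [transpose_sub, Matrix.sub_mul, Matrix.mul_sub, trace_sub, h, hDE]
  ring

end Trace

section FrobNorm

variable {m n k : ℕ}

theorem frobNorm_sq (M : Matrix (Fin m) (Fin n) ℝ) : frobNorm M ^ 2 = (Mᵀ * M).trace := by
  rw [frobNorm, Real.sq_sqrt (by positivity), Finset.sum_comm]
  simp [trace, mul_apply, sq]

theorem frobNorm_sub_sq_of_trace_eq_zero {E D : Matrix (Fin m) (Fin n) ℝ}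
    (h : (Eᵀ * D).trace = 0) :
    frobNorm (E - D) ^ 2 = frobNorm E ^ 2 + frobNorm D ^ 2 := by
  simp only [frobNorm_sq, trace_transpose_sub_mul_sub h]

theorem frobNorm_mul_transpose_sq {Z : Matrix (Fin n) (Fin k) ℝ} (hZ : Zᵀ * Z = 1)
    (M : Matrix (Fin m) (Fin k) ℝ) : frobNorm (M * Zᵀ) ^ 2 = frobNorm M ^ 2 := by
  rw [frobNorm_sq, frobNorm_sq, transpose_mul, transpose_transpose, Matrix.mul_assoc,
    trace_mul_comm, Matrix.mul_assoc, Matrix.mul_assoc M, hZ, Matrix.mul_one]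

end FrobNorm

section Residual

variable {R : Type*} [CommRing R] {m n k c : Type*} [Fintype n] [Fintype k] [Fintype c]
  [DecidableEq k]

theorem Matrix.sub_mul_mul_transpose_mul_self {A : Matrix m n R} {Z : Matrix n k R}
    (hZ : Zᵀ * Z = 1) : (A - A * Z * Zᵀ) * Z = 0 := by
  rw [Matrix.sub_mul, Matrix.mul_assoc (A * Z), hZ, Matrix.mul_one, sub_self]

theorem Matrix.sub_mul_right_inverse_eq (A : Matrix m n R) {Z : Matrix n k R}
    {S : Matrix n c R} {W : Matrix c k R} (hW : Zᵀ * S * W = 1) :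
    A - A * S * W * Zᵀ = (A - A * Z * Zᵀ) - (A - A * Z * Zᵀ) * S * W * Zᵀ := by
  have hAZ : A * Z * Zᵀ * S * W = A * Z := by
    rw [Matrix.mul_assoc (A * Z), Matrix.mul_assoc (A * Z), hW, Matrix.mul_one]
  simp only [Matrix.sub_mul, hAZ]
  abel

end Residual

/-- structural lemma for column-based low rank approximation. With
`E = A − A Z Zᵀ` and `W` a right inverse of `Zᵀ S`, the matrix `A S W Zᵀ` has rank at
most `k`, lies in the column space of `A S`, and satisfies
`‖A − A S W Zᵀ‖_F² = ‖E‖_F² + ‖E S W Zᵀ‖_F² ≤ ‖E‖_F² + ‖E S W‖_F²`. -/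
theorem stmt10 {m n k c : ℕ} (A : Matrix (Fin m) (Fin n) ℝ) (Z : Matrix (Fin n) (Fin k) ℝ)
    (hZ : Zᵀ * Z = 1) (S : Matrix (Fin n) (Fin c) ℝ) (W : Matrix (Fin c) (Fin k) ℝ)
    (hW : Zᵀ * S * W = 1) :
    frobNorm (A - A * S * W * Zᵀ) ^ 2
        = frobNorm (A - A * Z * Zᵀ) ^ 2 + frobNorm ((A - A * Z * Zᵀ) * S * W * Zᵀ) ^ 2 ∧
    frobNorm (A - A * Z * Zᵀ) ^ 2 + frobNorm ((A - A * Z * Zᵀ) * S * W * Zᵀ) ^ 2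
        ≤ frobNorm (A - A * Z * Zᵀ) ^ 2 + frobNorm ((A - A * Z * Zᵀ) * S * W) ^ 2 ∧
    (A * S * W * Zᵀ).rank ≤ k ∧
    (∃ X : Matrix (Fin c) (Fin n) ℝ, A * S * W * Zᵀ = (A * S) * X) := by
  set E := A - A * Z * Zᵀ
  have hEZ : E * Z = 0 := sub_mul_mul_transpose_mul_self hZ
  refine ⟨?_, ?_, ?_, W * Zᵀ, by simp only [Matrix.mul_assoc]⟩
  · rw [sub_mul_right_inverse_eq A hW]
    exact frobNorm_sub_sq_of_trace_eq_zero
      (trace_transpose_mul_mul_transpose_eq_zero hEZ (E * S * W))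
  · rw [frobNorm_mul_transpose_sq hZ]
  · exact (rank_mul_le_right _ Zᵀ).trans (rank_le_height Zᵀ)
end
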